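/- 𝒜, regarded as a k-module via the right unit η_R (i.e. with action h · x := η_R(h)·x), is free with basis the monomials τ^E ξ^R with all e_s ∈ {0,1}: every element of 𝒜 is uniquely a finite sum Σ τ^E ξ^R · η_R(h_{E,R}) with h_{E,R} ∈ k. (Paper's Lemma 'right H-basis of 𝒜_{∗,∗}', case ℓ = 2.) -/

import Mathlib

open MvPolynomial TensorProduct

noncomputable section

/-- Variables of the dual motivic Steenrod algebra: `.inl i` is `τᵢ`, `.inr i` is `ξ_{i+1}`. -/
abbrev MotVar : Type := ℕ ⊕ ℕ

variable (k : Type) [CommRing k]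

/-- `τᵢ` as a polynomial generator. -/
def tP (i : ℕ) : MvPolynomial MotVar k := X (Sum.inl i)

/-- `ξᵢ` as a polynomial generator, with the convention `ξ₀ = 1`. -/
def xP : ℕ → MvPolynomial MotVar k
  | 0 => 1
  | i + 1 => X (Sum.inr i)

variable (τ ρ : k)

/-- The ideal of defining relations `τᵢ² = τ·ξ_{i+1} + ρ·τ_{i+1} + ρ·τ₀·ξ_{i+1}`. -/
def relIdeal : Ideal (MvPolynomial MotVar k) :=
  Ideal.span (Set.range fun i : ℕ =>
    tP k i ^ 2 - (C τ * xP k (i + 1) + C ρ * tP k (i + 1) + C ρ * tP k 0 * xP k (i + 1)))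

/-- The mod 2 dual motivic Steenrod algebra over `k` (with `H_{*,*}` replaced by `k`). -/
abbrev DSA : Type := MvPolynomial MotVar k ⧸ relIdeal k τ ρ

/-- The canonical projection onto the dual Steenrod algebra. -/
def mkDSA : MvPolynomial MotVar k →+* DSA k τ ρ := Ideal.Quotient.mk _

/-- The monomial `τ^E ξ^R`, where `R i` records the exponent `r_{i+1}` of `ξ_{i+1}`. -/
def monP (E R : ℕ →₀ ℕ) : MvPolynomial MotVar k :=
  (E.prod fun i e => tP k i ^ e) * (R.prod fun i r => xP k (i + 1) ^ r)

/-- `k = F₂[τ, ρ]`, the mod 2 motivic cohomology ring of the base in the paper's model. -/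
abbrev kk : Type := MvPolynomial (Fin 2) (ZMod 2)

/-- The element `τ ∈ k`. -/
def τ₂ : kk := X 0

/-- The element `ρ ∈ k`. -/
def ρ₂ : kk := X 1

/-!
In characteristic 2 the substitution `τ ↦ τ + ρ τ₀` (fixing `ρ`, `τᵢ`, `ξᵢ`) is an involution
`twist` of `k[τᵢ, ξᵢ]`. It carries `η_R` to the left unit and the relation
`τᵢ² = τ ξ_{i+1} + ρ τ_{i+1} + ρ τ₀ ξ_{i+1}` to `τᵢ² = τ ξ_{i+1} + ρ τ_{i+1}`, so the right module
`𝒜` is isomorphic to the left module `k[τᵢ, ξᵢ] / (τᵢ² - τ ξ_{i+1} - ρ τ_{i+1})`.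

For the latter, with `τ ρ` arbitrary elements of any commutative ring, the monomials with all
`eᵢ ≤ 1` form a basis by a Gröbner-basis argument: rewriting `τⱼ²` for the least such `j` lowers
the τ-degree, which defines a normal form of monomials; the two reductions of a monomial divisible
by `τᵢ² τⱼ²` agree, so the normal form vanishes on the ideal and inverts the basis map.
-/

namespace DualSteenrod

open Finsupp (single linearCombination)

abbrev StdIdx : Type := {p : (ℕ →₀ ℕ) × (ℕ →₀ ℕ) // ∀ s, p.1 s ≤ 1}

def tauDegree : (MotVar →₀ ℕ) →+ ℕ := Finsupp.weight (Sum.elim 1 0)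

@[simp] lemma tauDegree_single_inl (j n : ℕ) : tauDegree (single (.inl j) n) = n := by
  simp [tauDegree, Finsupp.weight_single]

@[simp] lemma tauDegree_single_inr (j n : ℕ) : tauDegree (single (.inr j) n) = 0 := by
  simp [tauDegree, Finsupp.weight_single]

lemma exists_eq_add_single_two {d : MotVar →₀ ℕ} {i : ℕ} (hi : 2 ≤ d (.inl i)) :
    ∃ d' j, j ≤ i ∧ d = d' + single (.inl j) 2 ∧ ∀ m < j, d' (.inl m) ≤ 1 := by
  classical
  have hex : ∃ j, 2 ≤ d (.inl j) := ⟨i, hi⟩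
  refine ⟨d - single (.inl (Nat.find hex)) 2, Nat.find hex, Nat.find_min' hex hi, ?_, ?_⟩
  · exact (tsub_add_cancel_of_le (Finsupp.single_le_iff.2 (Nat.find_spec hex))).symm
  · intro m hm
    have := Nat.find_min hex hm
    simp only [Finsupp.coe_tsub, Pi.sub_apply]
    omega

lemma monP_eq_monomial (E R : ℕ →₀ ℕ) : monP k E R = monomial (E.sumElim R) 1 := by
  rw [monomial_eq, C_1, one_mul, Finsupp.prod_sumElim]
  rfl

def sqRelIdeal : Ideal (MvPolynomial MotVar k) :=
  Ideal.span (Set.range fun i : ℕ => tP k i ^ 2 - (C τ * xP k (i + 1) + C ρ * tP k (i + 1)))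

variable {k}

open scoped Classical in
def normalForm (d : MotVar →₀ ℕ) : StdIdx →₀ k :=
  if h : ∃ j, 2 ≤ d (.inl j) then
    let d' := d - single (.inl (Nat.find h)) 2
    τ • normalForm (d' + single (.inr (Nat.find h)) 1) +
      ρ • normalForm (d' + single (.inl (Nat.find h + 1)) 1)
  else
    single ⟨Finsupp.sumFinsuppEquivProdFinsupp d, fun s => by
      simp only [not_exists, not_le] at h
      exact Nat.le_of_lt_succ (h s)⟩ 1
termination_by tauDegree d
decreasing_by
  all_goals
    have := congrArg tauDegree (tsub_add_cancel_of_le (Finsupp.single_le_iff.2 (Nat.find_spec h)))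
    simp only [map_add, tauDegree_single_inl, tauDegree_single_inr] at this ⊢
    omega

lemma normalForm_of_forall_le_one {d : MotVar →₀ ℕ} (hd : ∀ j, d (.inl j) ≤ 1) :
    normalForm τ ρ d = single ⟨Finsupp.sumFinsuppEquivProdFinsupp d, hd⟩ 1 := by
  rw [normalForm, dif_neg (by simpa only [not_exists, not_le, Nat.lt_succ_iff] using hd)]

lemma normalForm_add_single_two_of_forall_lt {d : MotVar →₀ ℕ} {j : ℕ}
    (hd : ∀ m < j, d (.inl m) ≤ 1) :
    normalForm τ ρ (d + single (.inl j) 2) =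
      τ • normalForm τ ρ (d + single (.inr j) 1) +
        ρ • normalForm τ ρ (d + single (.inl (j + 1)) 1) := by
  classical
  have hex : ∃ m, 2 ≤ (d + single (.inl j) 2 : MotVar →₀ ℕ) (.inl m) := ⟨j, by simp⟩
  have hfind : Nat.find hex = j := by
    refine (Nat.find_eq_iff hex).2 ⟨by simp, fun m hm => ?_⟩
    have := hd m hm
    simp [hm.ne']
    omega
  rw [normalForm, dif_pos hex]
  simp only [hfind, add_tsub_cancel_right]

lemma normalForm_add_single_two (d : MotVar →₀ ℕ) (i : ℕ) :
    normalForm τ ρ (d + single (.inl i) 2) =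
      τ • normalForm τ ρ (d + single (.inr i) 1) +
        ρ • normalForm τ ρ (d + single (.inl (i + 1)) 1) := by
  induction hn : tauDegree d using Nat.strong_induction_on generalizing d with
  | _ n ih =>
  by_cases hd : ∀ m < i, d (.inl m) ≤ 1
  · exact normalForm_add_single_two_of_forall_lt τ ρ hd
  obtain ⟨m, hmi, hm⟩ : ∃ m < i, 2 ≤ d (.inl m) := by simpa [Nat.succ_le_iff] using hd
  obtain ⟨d, j, hjm, rfl, hj⟩ := exists_eq_add_single_two hm
  subst hn
  have hlt {m : ℕ} (hm : m < j) (v : MotVar) (n : ℕ) (hv : v ≠ .inl m) :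
      (d + single v n) (.inl m) ≤ 1 := by
    simpa [Finsupp.single_apply, hv] using hj m hm
  have ih' (v : MotVar) (hv : tauDegree (single v 1) < 2) :=
    ih _ (by simpa using hv) (d + single v 1) rfl
  -- Reducing `τⱼ²` first (left) or `τᵢ²` first (right) gives the same four terms.
  rw [add_right_comm,
    normalForm_add_single_two_of_forall_lt τ ρ (fun m hm => hlt hm _ _ (by simp; omega)),
    add_right_comm d (single (.inl i) 2), add_right_comm d (single (.inl i) 2),
    ih' _ (by simp), ih' _ (by simp),
    add_right_comm d (single (.inl j) 2), add_right_comm d (single (.inl j) 2),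
    normalForm_add_single_two_of_forall_lt τ ρ (fun m hm => hlt hm _ _ (by simp)),
    normalForm_add_single_two_of_forall_lt τ ρ (fun m hm => hlt hm _ _ (by simp; omega)),
    add_right_comm d (single (.inl (j + 1)) 1) (single (.inr i) 1),
    add_right_comm d (single (.inl (j + 1)) 1) (single (.inl (i + 1)) 1),
    add_right_comm d (single (.inr j) 1) (single (.inl (i + 1)) 1),
    add_right_comm d (single (.inr j) 1) (single (.inr i) 1)]
  module

def normalFormₗ : MvPolynomial MotVar k →ₗ[k] StdIdx →₀ k :=
  (basisMonomials MotVar k).constr k (normalForm τ ρ)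

lemma normalFormₗ_monomial (d : MotVar →₀ ℕ) (c : k) :
    normalFormₗ τ ρ (monomial d c) = c • normalForm τ ρ d := by
  have := (basisMonomials MotVar k).constr_basis k (normalForm τ ρ) d
  rw [coe_basisMonomials] at this
  rw [show monomial d c = c • monomial d 1 by rw [smul_monomial, smul_eq_mul, mul_one], map_smul,
    normalFormₗ, this]

lemma normalFormₗ_mul_relation (q : MvPolynomial MotVar k) (i : ℕ) :
    normalFormₗ τ ρ (q * (tP k i ^ 2 - (C τ * xP k (i + 1) + C ρ * tP k (i + 1)))) = 0 := by
  induction q using MvPolynomial.induction_on' with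
  | add p q hp hq => rw [add_mul, map_add, hp, hq, add_zero]
  | monomial d c =>
    simp only [tP, xP, X_pow_eq_monomial, C_mul_X_eq_monomial, mul_sub, mul_add,
      monomial_mul, map_sub, map_add, normalFormₗ_monomial, mul_one, normalForm_add_single_two]
    module

lemma normalFormₗ_eq_zero_of_mem {p : MvPolynomial MotVar k} (hp : p ∈ sqRelIdeal k τ ρ) :
    normalFormₗ τ ρ p = 0 := by
  suffices ∀ q, normalFormₗ τ ρ (q * p) = 0 by simpa using this 1
  induction hp using Submodule.span_induction with
  | mem x hx =>
    obtain ⟨i, rfl⟩ := hx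
    exact fun q => normalFormₗ_mul_relation τ ρ q i
  | zero => simp
  | add x y _ _ hx hy => simp [mul_add, hx, hy]
  | smul r x _ hx => simpa [← mul_assoc] using fun q => hx (q * r)

lemma normalFormₗ_linearCombination_monP (h : StdIdx →₀ k) :
    normalFormₗ τ ρ (linearCombination k (fun p : StdIdx => monP k p.1.1 p.1.2) h) = h := by
  induction h using Finsupp.induction_linear with
  | zero => simp
  | add f g hf hg => rw [map_add, map_add, hf, hg]
  | single p c =>
    rw [Finsupp.linearCombination_single, map_smul, monP_eq_monomial, normalFormₗ_monomial,
      one_smul, normalForm_of_forall_le_one τ ρ (fun j => p.2 j), Finsupp.smul_single_one]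
    exact congrArg (single · c)
      (Subtype.ext (Finsupp.sumFinsuppEquivProdFinsupp.apply_symm_apply _))

lemma mkₐ_monomial_eq_linearCombination (d : MotVar →₀ ℕ) :
    Ideal.Quotient.mkₐ k (sqRelIdeal k τ ρ) (monomial d 1) =
      linearCombination k (fun p : StdIdx => Ideal.Quotient.mkₐ k (sqRelIdeal k τ ρ)
        (monP k p.1.1 p.1.2)) (normalForm τ ρ d) := by
  set π := Ideal.Quotient.mkₐ k (sqRelIdeal k τ ρ)
  induction hn : tauDegree d using Nat.strong_induction_on generalizing d with
  | _ n ih =>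
  by_cases hd : ∀ j, d (.inl j) ≤ 1
  · rw [normalForm_of_forall_le_one τ ρ hd, Finsupp.linearCombination_single, one_smul,
      monP_eq_monomial]
    exact congrArg (fun e => π (monomial e 1))
      (Finsupp.sumFinsuppEquivProdFinsupp.symm_apply_apply d).symm
  obtain ⟨i, hi⟩ : ∃ i, 2 ≤ d (.inl i) := by simpa [Nat.succ_le_iff] using hd
  obtain ⟨d, j, -, rfl, hj⟩ := exists_eq_add_single_two hi
  subst hn
  have hrel : π (tP k j ^ 2) = π (C τ * xP k (j + 1) + C ρ * tP k (j + 1)) :=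
    Ideal.Quotient.eq.2 (Ideal.subset_span ⟨j, rfl⟩)
  rw [normalForm_add_single_two_of_forall_lt τ ρ hj, map_add, map_smul, map_smul,
    ← ih _ (by simp) _ rfl, ← ih _ (by simp) _ rfl]
  calc π (monomial (d + single (.inl j) 2) 1)
      = π (monomial d 1) * π (tP k j ^ 2) := by
        rw [← map_mul, tP, X_pow_eq_monomial, monomial_mul, mul_one]
    _ = _ := by
        rw [hrel, ← map_mul, tP, xP, C_mul_X_eq_monomial, C_mul_X_eq_monomial, mul_add,
          monomial_mul, monomial_mul, map_add, one_mul, one_mul, ← map_smul π τ,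
          ← map_smul π ρ, smul_monomial, smul_monomial, smul_eq_mul, smul_eq_mul, mul_one,
          mul_one]

theorem bijective_linearCombination_mkₐ_monP :
    Function.Bijective (linearCombination k fun p : StdIdx =>
      Ideal.Quotient.mkₐ k (sqRelIdeal k τ ρ) (monP k p.1.1 p.1.2)) := by
  set π := Ideal.Quotient.mkₐ k (sqRelIdeal k τ ρ)
  constructor
  · have hπ (h : StdIdx →₀ k) :
        linearCombination k (fun p : StdIdx => π (monP k p.1.1 p.1.2)) h =
          π (linearCombination k (fun p : StdIdx => monP k p.1.1 p.1.2) h) :=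
      (Finsupp.apply_linearCombination k π.toLinearMap _ h).symm
    intro h₁ h₂ heq
    rw [hπ, hπ] at heq
    have := normalFormₗ_eq_zero_of_mem τ ρ (Ideal.Quotient.eq.1 heq)
    rwa [map_sub, normalFormₗ_linearCombination_monP, normalFormₗ_linearCombination_monP,
      sub_eq_zero] at this
  · intro x
    obtain ⟨p, rfl⟩ := Ideal.Quotient.mkₐ_surjective k _ x
    have hsec : (linearCombination k fun p : StdIdx => π (monP k p.1.1 p.1.2)) ∘ₗ
        normalFormₗ τ ρ = π.toLinearMap := by
      refine (basisMonomials MotVar k).ext fun d => ?_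
      rw [coe_basisMonomials, LinearMap.comp_apply, normalFormₗ_monomial, one_smul,
        AlgHom.toLinearMap_apply, mkₐ_monomial_eq_linearCombination]
    exact ⟨normalFormₗ τ ρ p, LinearMap.congr_fun hsec p⟩

def rightUnitPoly : kk →ₐ[ZMod 2] MvPolynomial MotVar kk :=
  aeval ![C τ₂ + C ρ₂ * tP kk 0, C ρ₂]

lemma rightUnitPoly_τ₂ : rightUnitPoly τ₂ = C τ₂ + C ρ₂ * tP kk 0 := aeval_X _ 0

lemma rightUnitPoly_ρ₂ : rightUnitPoly ρ₂ = C ρ₂ := aeval_X _ 1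

def twist : MvPolynomial MotVar kk →+* MvPolynomial MotVar kk :=
  eval₂Hom rightUnitPoly.toRingHom X

lemma twist_C (c : kk) : twist (C c) = rightUnitPoly c := eval₂Hom_C _ _ c

lemma twist_X (v : MotVar) : twist (X v) = X v := eval₂Hom_X' _ _ v

lemma twist_monP (E R : ℕ →₀ ℕ) : twist (monP kk E R) = monP kk E R := by
  simp only [monP, tP, xP, map_mul, map_finsuppProd, map_pow, twist_X]

lemma twist_rightUnitPoly (c : kk) : twist (rightUnitPoly c) = C c := by
  suffices twist.comp rightUnitPoly.toRingHom = C from RingHom.congr_fun this c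
  refine ringHom_ext' (RingHom.ext_zmod _ _) (Fin.forall_fin_two.2 ⟨?_, ?_⟩)
  · change twist (rightUnitPoly τ₂) = C τ₂
    rw [rightUnitPoly_τ₂, map_add, map_mul, twist_C, twist_C, rightUnitPoly_τ₂,
      rightUnitPoly_ρ₂, tP, twist_X, add_assoc, CharTwo.add_self_eq_zero, add_zero]
  · change twist (rightUnitPoly ρ₂) = C ρ₂
    rw [rightUnitPoly_ρ₂, twist_C, rightUnitPoly_ρ₂]

lemma twist_twist (p : MvPolynomial MotVar kk) : twist (twist p) = p := by
  suffices twist.comp twist = RingHom.id _ from RingHom.congr_fun this p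
  refine ringHom_ext (fun c => ?_) (fun v => ?_)
  · simp only [RingHom.comp_apply, twist_C, twist_rightUnitPoly, RingHom.id_apply]
  · simp only [RingHom.comp_apply, twist_X, RingHom.id_apply]

lemma map_twist_relIdeal : (relIdeal kk τ₂ ρ₂).map twist = sqRelIdeal kk τ₂ ρ₂ := by
  rw [relIdeal, sqRelIdeal, Ideal.map_span, ← Set.range_comp]
  congr 2
  funext i
  simp only [Function.comp_apply, map_sub, map_add, map_mul, map_pow, twist_C, tP, xP, twist_X,
    rightUnitPoly_τ₂, rightUnitPoly_ρ₂, sub_right_inj]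
  linear_combination
    C ρ₂ * X (.inl 0) * X (.inr i) * CharTwo.two_eq_zero (R := MvPolynomial MotVar kk)

def twistQuotEquiv :
    DSA kk τ₂ ρ₂ ≃+* MvPolynomial MotVar kk ⧸ sqRelIdeal kk τ₂ ρ₂ :=
  Ideal.quotientEquiv _ _
    (RingEquiv.ofRingHom twist twist (RingHom.ext twist_twist) (RingHom.ext twist_twist))
    map_twist_relIdeal.symm

lemma twistQuotEquiv_mkDSA (p : MvPolynomial MotVar kk) :
    twistQuotEquiv (mkDSA kk τ₂ ρ₂ p) = Ideal.Quotient.mk _ (twist p) := rfl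

lemma eq_mkDSA_rightUnitPoly (ηR : kk →ₐ[ZMod 2] DSA kk τ₂ ρ₂)
    (hτ : ηR τ₂ = algebraMap kk (DSA kk τ₂ ρ₂) τ₂ +
      algebraMap kk (DSA kk τ₂ ρ₂) ρ₂ * mkDSA kk τ₂ ρ₂ (tP kk 0))
    (hρ : ηR ρ₂ = algebraMap kk (DSA kk τ₂ ρ₂) ρ₂) (c : kk) :
    ηR c = mkDSA kk τ₂ ρ₂ (rightUnitPoly c) := by
  suffices ηR = (Ideal.Quotient.mkₐ (ZMod 2) (relIdeal kk τ₂ ρ₂)).comp rightUnitPoly from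
    DFunLike.congr_fun this c
  refine algHom_ext (Fin.forall_fin_two.2 ⟨?_, ?_⟩)
  · change ηR τ₂ = mkDSA kk τ₂ ρ₂ (rightUnitPoly τ₂)
    rw [hτ, rightUnitPoly_τ₂, map_add, map_mul]
    rfl
  · change ηR ρ₂ = mkDSA kk τ₂ ρ₂ (rightUnitPoly ρ₂)
    rw [hρ, rightUnitPoly_ρ₂]
    rfl

end DualSteenrod

open DualSteenrod in
theorem statement2 (ηR : kk →ₐ[ZMod 2] DSA kk τ₂ ρ₂)
    (hτ : ηR τ₂ = algebraMap kk (DSA kk τ₂ ρ₂) τ₂ +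
      algebraMap kk (DSA kk τ₂ ρ₂) ρ₂ * mkDSA kk τ₂ ρ₂ (tP kk 0))
    (hρ : ηR ρ₂ = algebraMap kk (DSA kk τ₂ ρ₂) ρ₂) :
    Function.Bijective
      (fun h : {p : (ℕ →₀ ℕ) × (ℕ →₀ ℕ) // ∀ s, p.1 s ≤ 1} →₀ kk =>
        h.sum fun p c => mkDSA kk τ₂ ρ₂ (monP kk p.1.1 p.1.2) * ηR c) := by
  have hterm (p : StdIdx) (c : kk) :
      twistQuotEquiv (mkDSA kk τ₂ ρ₂ (monP kk p.1.1 p.1.2) * ηR c) =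
        c • Ideal.Quotient.mkₐ kk (sqRelIdeal kk τ₂ ρ₂) (monP kk p.1.1 p.1.2) := by
    rw [map_mul, eq_mkDSA_rightUnitPoly ηR hτ hρ, twistQuotEquiv_mkDSA, twistQuotEquiv_mkDSA,
      twist_monP, twist_rightUnitPoly, ← map_smul, smul_eq_C_mul, map_mul, mul_comm]
    rfl
  convert twistQuotEquiv.symm.bijective.comp
    (bijective_linearCombination_mkₐ_monP τ₂ ρ₂) with h
  rw [Function.comp_apply, RingEquiv.eq_symm_apply, map_finsuppSum,
    Finsupp.linearCombination_apply]
  exact Finsupp.sum_congr fun p _ => hterm p (h p)
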